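/- arXiv:2006.09956 — 3 statements merged into one kernel-verified Lean document; each statement's English description precedes it below -/
import Mathlib

section
/- If the linear subspace L ⊆ Sⁿ contains a positive definite matrix, then the image π_L(S⁺ₙ) is a closed subset of L*. -/
open Matrix

section Aux
variable {n : ℕ}

private lemma entry_cont (i j : Fin n) :
    Continuous fun X : Matrix (Fin n) (Fin n) ℝ => X i j :=
  (continuous_apply j).comp (continuous_apply i)

private lemma continuous_traceMul (A : Matrix (Fin n) (Fin n) ℝ) :
    Continuous fun X : Matrix (Fin n) (Fin n) ℝ => (A * X).trace := by
  have : (fun X : Matrix (Fin n) (Fin n) ℝ => (A * X).trace)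
      = fun X => ∑ i, ∑ j, A i j * X j i := by
    funext X
    simp [Matrix.trace, Matrix.diag, Matrix.mul_apply]
  rw [this]
  exact continuous_finset_sum _ fun i _ => continuous_finset_sum _ fun j _ =>
    continuous_const.mul (entry_cont j i)

private lemma continuous_trace' : Continuous fun X : Matrix (Fin n) (Fin n) ℝ => X.trace := by
  have : (fun X : Matrix (Fin n) (Fin n) ℝ => X.trace) = fun X => ∑ i, X i i := by
    funext X; simp [Matrix.trace, Matrix.diag]
  rw [this]
  exact continuous_finset_sum _ fun i _ => entry_cont i i

private lemma isClosed_psd : IsClosed {X : Matrix (Fin n) (Fin n) ℝ | X.PosSemidef} := by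
  have h1 : {X : Matrix (Fin n) (Fin n) ℝ | X.PosSemidef}
      = (⋂ i, ⋂ j, {X | star (X j i) = X i j}) ∩ ⋂ v : Fin n → ℝ, {X | 0 ≤ star v ⬝ᵥ X *ᵥ v} := by
    ext X
    simp only [Set.mem_setOf_eq, Set.mem_inter_iff, Set.mem_iInter, Matrix.posSemidef_iff_dotProduct_mulVec,
      Matrix.IsHermitian.ext_iff]
  rw [h1]
  refine IsClosed.inter (isClosed_iInter fun i => isClosed_iInter fun j =>
    isClosed_eq (continuous_star.comp (entry_cont j i)) (entry_cont i j)) ?_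
  refine isClosed_iInter fun v => isClosed_le continuous_const ?_
  have : (fun X : Matrix (Fin n) (Fin n) ℝ => star v ⬝ᵥ X *ᵥ v)
      = fun X => ∑ i, star v i * ∑ j, X i j * v j := by
    funext X; simp [dotProduct, Matrix.mulVec]
  rw [this]
  exact continuous_finset_sum _ fun i _ => continuous_const.mul
    (continuous_finset_sum _ fun j _ => (entry_cont i j).mul continuous_const)

private lemma psd_diag_nonneg (Y : Matrix (Fin n) (Fin n) ℝ) (hY : Y.PosSemidef) (i : Fin n) :
    0 ≤ Y i i := by
  have h := hY.dotProduct_mulVec_nonneg (Pi.single i 1)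
  classical
  simpa [dotProduct, mulVec, Pi.single_apply, Finset.mul_sum, mul_ite,
    Finset.sum_ite_eq'] using h

private lemma psd_entry_bound (Y : Matrix (Fin n) (Fin n) ℝ) (hY : Y.PosSemidef) (r : ℝ)
    (htr : Y.trace ≤ r) (i j : Fin n) : Y i j ∈ Set.Icc (-r) r := by
  classical
  have hdle : ∀ k : Fin n, Y k k ≤ r := by
    intro k
    refine le_trans ?_ htr
    have : Y.trace = ∑ l, Y l l := by simp [Matrix.trace, Matrix.diag]
    rw [this]
    exact Finset.single_le_sum (fun l _ => psd_diag_nonneg Y hY l) (Finset.mem_univ k)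
  have hsym : Y j i = Y i j := by
    have := hY.1
    have h2 := congrFun (congrFun this i) j
    simpa [Matrix.conjTranspose_apply] using h2
  have q1 : 0 ≤ Y i i + Y i j + Y j i + Y j j := by
    have h := hY.dotProduct_mulVec_nonneg (Pi.single i (1:ℝ) + Pi.single j 1)
    simp only [star_trivial, mulVec_add, dotProduct_add, add_dotProduct,
      Matrix.mulVec_single, single_dotProduct] at h
    by_cases hij : i = j
    · subst hij; have := psd_diag_nonneg Y hY i; linarith
    · simp at h; linarith
  have q2 : 0 ≤ Y i i - Y i j - Y j i + Y j j := by
    have h := hY.dotProduct_mulVec_nonneg (Pi.single i (1:ℝ) + Pi.single j (-1))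
    simp only [star_trivial, mulVec_add, dotProduct_add, add_dotProduct,
      Matrix.mulVec_single, single_dotProduct] at h
    by_cases hij : i = j
    · subst hij; linarith
    · simp at h; linarith
  constructor
  · linarith [hdle i, hdle j, q2]
  · linarith [hdle i, hdle j, q1]

private lemma compact_T (r : ℝ) :
    IsCompact {Y : Matrix (Fin n) (Fin n) ℝ | Y.PosSemidef ∧ Y.trace ≤ r} := by
  set r' : ℝ := max r 0 with hr'
  have hsub : {Y : Matrix (Fin n) (Fin n) ℝ | Y.PosSemidef ∧ Y.trace ≤ r} ⊆
      Set.pi Set.univ (fun _ : Fin n => Set.pi Set.univ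
        (fun _ : Fin n => Set.Icc (-r') r')) := by
    rintro Y ⟨hY, htr⟩ i _ j _
    exact psd_entry_bound Y hY r' (le_trans htr (le_max_left _ _)) i j
  have hclosed : IsClosed {Y : Matrix (Fin n) (Fin n) ℝ | Y.PosSemidef ∧ Y.trace ≤ r} := by
    have : {Y : Matrix (Fin n) (Fin n) ℝ | Y.PosSemidef ∧ Y.trace ≤ r}
        = {Y | Y.PosSemidef} ∩ {Y | Y.trace ≤ r} := rfl
    rw [this]
    exact isClosed_psd.inter (isClosed_le continuous_trace' continuous_const)
  refine IsCompact.of_isClosed_subset ?_ hclosed hsub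
  exact isCompact_univ_pi fun i => isCompact_univ_pi fun j => isCompact_Icc

end Aux

/-- If the subspace L ⊆ Sⁿ contains a positive definite matrix, then the image
π_L(S⁺ₙ) is closed (in the dual of L, realized as functions ↥L → ℝ). -/
theorem stmt_7 {n : ℕ} (L : Submodule ℝ (Matrix (Fin n) (Fin n) ℝ))
    (hpd : ∃ A ∈ L, A.PosDef) :
    IsClosed ((fun X : Matrix (Fin n) (Fin n) ℝ =>
        fun A : ↥L => ((A : Matrix (Fin n) (Fin n) ℝ) * X).trace) ''
        {X | X.PosSemidef}) := by
  classical
  obtain ⟨A₀, hA₀L, hA₀⟩ := hpd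
  set Φ : Matrix (Fin n) (Fin n) ℝ → (↥L → ℝ) :=
    fun X => fun A : ↥L => ((A : Matrix (Fin n) (Fin n) ℝ) * X).trace with hΦ
  have hΦc : Continuous Φ := continuous_pi fun A => continuous_traceMul _
  apply isClosed_of_closure_subset
  intro f hf
  set a₀ : ↥L := ⟨A₀, hA₀L⟩
  set r : ℝ := f a₀ + 1 with hr
  -- square root of A₀
  obtain ⟨B, hB, hBB⟩ : ∃ B : Matrix (Fin n) (Fin n) ℝ, B.PosSemidef ∧ B * B = A₀ := by
    open scoped MatrixOrder in
    exact ⟨CFC.sqrt A₀, Matrix.nonneg_iff_posSemidef.mp (CFC.sqrt_nonneg A₀),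
      CFC.sqrt_mul_sqrt_self A₀ (Matrix.nonneg_iff_posSemidef.mpr hA₀.posSemidef)⟩
  have hdet : IsUnit B.det := by
    have h2 : B.det * B.det = A₀.det := by rw [← Matrix.det_mul, hBB]
    have h3 := hA₀.det_pos
    refine isUnit_iff_ne_zero.mpr fun h => ?_
    rw [h, mul_zero] at h2
    rw [← h2] at h3
    exact lt_irrefl 0 h3
  have hBH : Bᴴ = B := hB.1
  have hBinvH : (B⁻¹)ᴴ = B⁻¹ := by rw [Matrix.conjTranspose_nonsing_inv, hBH]
  set T : Set (Matrix (Fin n) (Fin n) ℝ) := {Y | Y.PosSemidef ∧ Y.trace ≤ r} with hT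
  set C : Set (↥L → ℝ) := Φ '' ((fun Y => B⁻¹ * Y * B⁻¹) '' T) with hC
  have hmc : Continuous fun Y : Matrix (Fin n) (Fin n) ℝ => B⁻¹ * Y * B⁻¹ := by
    have h1 : (fun Y : Matrix (Fin n) (Fin n) ℝ => B⁻¹ * Y * B⁻¹)
        = fun Y => fun i j => ∑ k, (∑ l, B⁻¹ i l * Y l k) * B⁻¹ k j := by
      funext Y i j
      simp [Matrix.mul_apply]
    rw [h1]
    refine continuous_pi fun i => continuous_pi fun j => ?_
    exact continuous_finset_sum _ fun k _ =>
      (continuous_finset_sum _ fun l _ => continuous_const.mul (entry_cont l k)).mul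
        continuous_const
  have hCcomp : IsCompact C := ((compact_T r).image hmc).image hΦc
  -- C ⊆ Φ '' S
  have hCS : C ⊆ Φ '' {X | X.PosSemidef} := by
    rintro g ⟨X, ⟨Y, ⟨hY, -⟩, rfl⟩, rfl⟩
    refine ⟨B⁻¹ * Y * B⁻¹, ?_, rfl⟩
    have := hY.mul_mul_conjTranspose_same B⁻¹
    rwa [hBinvH] at this
  -- f lies in the closure of (open set) ∩ (image)
  have hU : IsOpen {g : ↥L → ℝ | g a₀ < r} := isOpen_lt (continuous_apply a₀) continuous_const
  have hfU : f ∈ {g : ↥L → ℝ | g a₀ < r} := by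
    simp only [Set.mem_setOf_eq, hr]; linarith
  have hf2 : f ∈ closure ({g : ↥L → ℝ | g a₀ < r} ∩ (Φ '' {X | X.PosSemidef})) :=
    hU.inter_closure ⟨hfU, hf⟩
  have hsub : {g : ↥L → ℝ | g a₀ < r} ∩ (Φ '' {X | X.PosSemidef}) ⊆ C := by
    rintro g ⟨hg, X, hX, rfl⟩
    have htr : (A₀ * X).trace ≤ r := le_of_lt hg
    set Y := B * X * B with hY
    have hYpsd : Y.PosSemidef := by
      have := hX.mul_mul_conjTranspose_same B
      rwa [hBH] at this
    have hYtr : Y.trace ≤ r := by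
      have h4 : Y.trace = (A₀ * X).trace := by
        rw [hY, Matrix.trace_mul_cycle, hBB]
      rw [h4]; exact htr
    have hXY : B⁻¹ * Y * B⁻¹ = X := by
      rw [hY, Matrix.mul_assoc B X B, Matrix.nonsing_inv_mul_cancel_left _ _ hdet,
        Matrix.mul_nonsing_inv_cancel_right _ _ hdet]
    exact ⟨B⁻¹ * Y * B⁻¹, ⟨Y, ⟨hYpsd, hYtr⟩, rfl⟩, by rw [hXY]⟩
  have hfC : f ∈ C := by
    have := closure_mono hsub hf2
    rwa [hCcomp.isClosed.closure_eq] at this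
  exact hCS hfC
end

section
/- Let L_t ⊆ S³ be the span of the matrices corresponding to the quadratic forms q₁ = x₁² and q₂ = x₂² + t·x₁x₃, for a real parameter t. For t ≠ 0, the image π_{L_t}(S³₊) ⊆ ℝ² equals {(z₁,z₂) : z₁ > 0} ∪ {(0,z₂) : z₂ ≥ 0} and is not closed; for t = 0, the image equals the closed quadrant ℝ≥0 × ℝ≥0. -/
open Matrix

lemma trA (X : Matrix (Fin 3) (Fin 3) ℝ) :
    ((Matrix.of ![![1,0,0],![0,0,0],![0,0,0]] : Matrix (Fin 3) (Fin 3) ℝ) * X).trace = X 0 0 := by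
  simp [Matrix.trace, Matrix.diag, Matrix.mul_apply, Fin.sum_univ_three,
    Matrix.vecHead, Matrix.vecTail]

lemma trB (t : ℝ) (X : Matrix (Fin 3) (Fin 3) ℝ) :
    ((Matrix.of ![![0,0,t/2],![0,1,0],![t/2,0,0]] : Matrix (Fin 3) (Fin 3) ℝ) * X).trace
      = X 1 1 + t/2 * X 2 0 + t/2 * X 0 2 := by
  simp [Matrix.trace, Matrix.diag, Matrix.mul_apply, Fin.sum_univ_three,
    Matrix.vecHead, Matrix.vecTail]
  ring

lemma quad {X : Matrix (Fin 3) (Fin 3) ℝ} (h : X.PosSemidef) (v : Fin 3 → ℝ) :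
    0 ≤ v 0 * (X 0 0 * v 0 + X 0 1 * v 1 + X 0 2 * v 2)
      + v 1 * (X 1 0 * v 0 + X 1 1 * v 1 + X 1 2 * v 2)
      + v 2 * (X 2 0 * v 0 + X 2 1 * v 1 + X 2 2 * v 2) := by
  have := h.dotProduct_mulVec_nonneg v
  simpa [dotProduct, Matrix.mulVec, Fin.sum_univ_three, mul_add, mul_comm] using this

lemma diag00 {X : Matrix (Fin 3) (Fin 3) ℝ} (h : X.PosSemidef) : 0 ≤ X 0 0 := by
  have := quad h ![1,0,0]; simpa using this

lemma diag11 {X : Matrix (Fin 3) (Fin 3) ℝ} (h : X.PosSemidef) : 0 ≤ X 1 1 := by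
  have := quad h ![0,1,0]; simpa using this

lemma sym02 {X : Matrix (Fin 3) (Fin 3) ℝ} (h : X.PosSemidef) : X 2 0 = X 0 2 := by
  have := congrFun (congrFun h.1 2) 0
  simpa [Matrix.conjTranspose_apply] using this.symm

lemma off02 {X : Matrix (Fin 3) (Fin 3) ℝ} (h : X.PosSemidef) (h0 : X 0 0 = 0) :
    X 0 2 = 0 := by
  by_contra hne
  have hs := sym02 h
  have key : ∀ s : ℝ, 0 ≤ 2 * s * X 0 2 + X 2 2 := by
    intro s
    have := quad h ![s,0,1]
    simp at this
    rw [h0, hs] at this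
    linarith
  have h1 := key ((-(X 2 2) - 1) / (2 * X 0 2))
  have h2 : 2 * ((-(X 2 2) - 1) / (2 * X 0 2)) * X 0 2 = -(X 2 2) - 1 := by
    field_simp
  linarith

lemma psd_rank1 (z a : ℝ) (hz : 0 < z) :
    (Matrix.of ![![z,0,a],![0,0,0],![a,0,a^2/z]] : Matrix (Fin 3) (Fin 3) ℝ).PosSemidef := by
  refine Matrix.PosSemidef.of_dotProduct_mulVec_nonneg ?_ ?_
  · ext i j
    fin_cases i <;> fin_cases j <;>
      simp [Matrix.conjTranspose_apply, Matrix.vecHead, Matrix.vecTail]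
  · intro v
    simp [dotProduct, Matrix.mulVec, Fin.sum_univ_three, Matrix.vecHead, Matrix.vecTail]
    rw [← mul_nonneg_iff_of_pos_right hz]
    field_simp
    nlinarith [sq_nonneg (z * v 0 + a * v 2)]

/-- For L_t = span of the matrices of q₁ = x₁² and q₂ = x₂² + t·x₁x₃: for t ≠ 0 the
image of the PSD cone is {z₁ > 0} ∪ ({0} × ℝ≥0) and is not closed; for t = 0 it is
the closed quadrant. -/
theorem stmt_11 (t : ℝ) :
    (t ≠ 0 →
      ((fun X : Matrix (Fin 3) (Fin 3) ℝ =>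
          (((Matrix.of ![![1,0,0],![0,0,0],![0,0,0]] : Matrix (Fin 3) (Fin 3) ℝ) * X).trace,
           ((Matrix.of ![![0,0,t/2],![0,1,0],![t/2,0,0]] : Matrix (Fin 3) (Fin 3) ℝ) * X).trace)) ''
          {X | X.PosSemidef}
        = {p : ℝ × ℝ | 0 < p.1} ∪ {p : ℝ × ℝ | p.1 = 0 ∧ 0 ≤ p.2}) ∧
      ¬ IsClosed ((fun X : Matrix (Fin 3) (Fin 3) ℝ =>
          (((Matrix.of ![![1,0,0],![0,0,0],![0,0,0]] : Matrix (Fin 3) (Fin 3) ℝ) * X).trace,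
           ((Matrix.of ![![0,0,t/2],![0,1,0],![t/2,0,0]] : Matrix (Fin 3) (Fin 3) ℝ) * X).trace)) ''
          {X | X.PosSemidef})) ∧
    (t = 0 →
      (fun X : Matrix (Fin 3) (Fin 3) ℝ =>
          (((Matrix.of ![![1,0,0],![0,0,0],![0,0,0]] : Matrix (Fin 3) (Fin 3) ℝ) * X).trace,
           ((Matrix.of ![![0,0,t/2],![0,1,0],![t/2,0,0]] : Matrix (Fin 3) (Fin 3) ℝ) * X).trace)) ''
          {X | X.PosSemidef}
        = Set.Ici 0 ×ˢ Set.Ici 0) := by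
  constructor
  · intro ht
    have heq : (fun X : Matrix (Fin 3) (Fin 3) ℝ =>
          (((Matrix.of ![![1,0,0],![0,0,0],![0,0,0]] : Matrix (Fin 3) (Fin 3) ℝ) * X).trace,
           ((Matrix.of ![![0,0,t/2],![0,1,0],![t/2,0,0]] : Matrix (Fin 3) (Fin 3) ℝ) * X).trace)) ''
          {X | X.PosSemidef}
        = {p : ℝ × ℝ | 0 < p.1} ∪ {p : ℝ × ℝ | p.1 = 0 ∧ 0 ≤ p.2} := by
      ext ⟨p1, p2⟩
      simp only [Set.mem_image, Set.mem_setOf_eq, Set.mem_union]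
      constructor
      · rintro ⟨X, hX, hfx⟩
        rw [trA, trB, Prod.mk.injEq] at hfx
        obtain ⟨e1, e2⟩ := hfx
        rcases lt_or_eq_of_le (diag00 hX) with h0 | h0
        · left; simpa [← e1] using h0
        · right
          have h02 := off02 hX h0.symm
          refine ⟨by simp [← e1, ← h0], ?_⟩
          rw [← e2, sym02 hX, h02]
          simpa using diag11 hX
      · rintro (hp | ⟨h1, h2⟩)
        · refine ⟨Matrix.of ![![p1,0,p2/t],![0,0,0],![p2/t,0,(p2/t)^2/p1]],
            psd_rank1 p1 (p2/t) hp, ?_⟩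
          rw [trA, trB, Prod.mk.injEq]
          constructor
          · rfl
          · show (0:ℝ) + t/2 * (p2/t) + t/2 * (p2/t) = p2
            field_simp
            ring
        · refine ⟨Matrix.diagonal ![0, p2, 0], Matrix.PosSemidef.diagonal ?_, ?_⟩
          · intro i; fin_cases i <;> simp [h2]
          · rw [trA, trB, Prod.mk.injEq]
            constructor
            · simp [Matrix.diagonal_apply, h1]
            · simp [Matrix.diagonal_apply]
    refine ⟨heq, ?_⟩
    rw [heq]
    intro hcl
    have hmem : ∀ n : ℕ, ((1:ℝ)/(n+1), (-1:ℝ)) ∈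
        ({p : ℝ × ℝ | 0 < p.1} ∪ {p : ℝ × ℝ | p.1 = 0 ∧ 0 ≤ p.2}) := by
      intro n
      left
      show (0:ℝ) < 1/(n+1)
      positivity
    have htend : Filter.Tendsto (fun n : ℕ => ((1:ℝ)/(n+1), (-1:ℝ)))
        Filter.atTop (nhds ((0:ℝ), (-1:ℝ))) :=
      (tendsto_one_div_add_atTop_nhds_zero_nat).prodMk_nhds tendsto_const_nhds
    have := hcl.mem_of_tendsto htend (Filter.Eventually.of_forall hmem)
    rcases this with h | ⟨_, h⟩ <;> simp at h <;> linarith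
  · intro ht
    subst ht
    ext ⟨p1, p2⟩
    simp only [Set.mem_image, Set.mem_setOf_eq, Set.mem_prod, Set.mem_Ici]
    constructor
    · rintro ⟨X, hX, hfx⟩
      rw [trA, trB, Prod.mk.injEq] at hfx
      obtain ⟨e1, e2⟩ := hfx
      constructor
      · simpa [← e1] using diag00 hX
      · rw [← e2]
        norm_num
        exact diag11 hX
    · rintro ⟨h1, h2⟩
      refine ⟨Matrix.diagonal ![p1, p2, 0], Matrix.PosSemidef.diagonal ?_, ?_⟩
      · intro i; fin_cases i <;> simp [h1, h2]
      · rw [trA, trB, Prod.mk.injEq]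
        constructor <;> simp [Matrix.diagonal_apply]
end

section
/- For any linear subspace L ⊆ Sⁿ, s(L) + s(L⊥) ≤ n, where s(L) is the maximal rank of a positive semidefinite matrix in L and L⊥ is the orthogonal complement of L with respect to the trace inner product. -/
/-- The spectrahedral rank of a set S of symmetric matrices: the maximal rank of a
positive semidefinite matrix in S. -/
noncomputable def specRank {n : ℕ} (S : Set (Matrix (Fin n) (Fin n) ℝ)) : ℕ :=
  sSup {r | ∃ X ∈ S, X.PosSemidef ∧ X.rank = r}

open Matrix in
lemma trace_transpose_mul_self_eq_zero {n : ℕ} {M : Matrix (Fin n) (Fin n) ℝ}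
    (h : (Mᵀ * M).trace = 0) : M = 0 := by
  have : ∀ j ∈ Finset.univ, ∀ i ∈ Finset.univ, M i j = 0 := by
    have h' : ∑ j, ∑ i, M i j ^ 2 = 0 := by
      simpa [Matrix.trace, Matrix.mul_apply, Matrix.diag, sq] using h
    have h2 := (Finset.sum_eq_zero_iff_of_nonneg (fun j _ =>
      Finset.sum_nonneg (fun i _ => sq_nonneg (M i j)))).mp h'
    intro j hj i hi
    have := (Finset.sum_eq_zero_iff_of_nonneg (fun i _ => sq_nonneg (M i j))).mp
      (h2 j hj) i hi
    exact pow_eq_zero_iff (by norm_num) |>.mp this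
  ext i j
  simpa using this j (Finset.mem_univ j) i (Finset.mem_univ i)

open Matrix in
lemma psd_mul_eq_zero_of_trace {n : ℕ} {A B : Matrix (Fin n) (Fin n) ℝ}
    (hA : A.PosSemidef) (hB : B.PosSemidef) (h : (A * B).trace = 0) : A * B = 0 := by
  open scoped MatrixOrder in
  set S := CFC.sqrt A with hS
  open scoped MatrixOrder in
  set T := CFC.sqrt B with hT
  have hSsym : Sᵀ = S := by open scoped MatrixOrder in exact (CFC.sqrt_nonneg A).posSemidef.1
  have hTsym : Tᵀ = T := by open scoped MatrixOrder in exact (CFC.sqrt_nonneg B).posSemidef.1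
  have hSS : S * S = A := by open scoped MatrixOrder in exact CFC.sqrt_mul_sqrt_self A hA.nonneg
  have hTT : T * T = B := by open scoped MatrixOrder in exact CFC.sqrt_mul_sqrt_self B hB.nonneg
  have key : ((S * T)ᵀ * (S * T)).trace = 0 := by
    have : (S * T)ᵀ * (S * T) = T * (S * (S * T)) := by
      rw [Matrix.transpose_mul, hSsym, hTsym]; noncomm_ring
    rw [this]
    calc (T * (S * (S * T))).trace = ((S * (S * T)) * T).trace := by
          rw [Matrix.trace_mul_comm]
      _ = (A * B).trace := by rw [← hSS, ← hTT]; noncomm_ring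
      _ = 0 := h
  have hST : S * T = 0 := trace_transpose_mul_self_eq_zero key
  calc A * B = S * (S * T) * T := by rw [← hSS, ← hTT]; noncomm_ring
    _ = 0 := by rw [hST]; simp

/-- For any linear subspace L of Sⁿ, s(L) + s(L⊥) ≤ n, where L⊥ is the orthogonal
complement of L with respect to the trace inner product. -/
theorem stmt_12 {n : ℕ} (L : Submodule ℝ (Matrix (Fin n) (Fin n) ℝ)) :
    specRank (L : Set (Matrix (Fin n) (Fin n) ℝ)) +
      specRank {B : Matrix (Fin n) (Fin n) ℝ | ∀ A ∈ L, (A * B).trace = 0} ≤ n := by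
  set S1 := {r | ∃ X ∈ (L : Set (Matrix (Fin n) (Fin n) ℝ)), X.PosSemidef ∧ X.rank = r}
  set S2 := {r | ∃ X ∈ {B : Matrix (Fin n) (Fin n) ℝ | ∀ A ∈ L, (A * B).trace = 0},
    X.PosSemidef ∧ X.rank = r}
  have hne1 : S1.Nonempty := ⟨0, 0, L.zero_mem, Matrix.PosSemidef.zero, Matrix.rank_zero⟩
  have hne2 : S2.Nonempty := ⟨0, 0, fun A _ => by simp, Matrix.PosSemidef.zero,
    Matrix.rank_zero⟩
  have hbdd1 : BddAbove S1 := ⟨n, fun r ⟨X, _, _, hr⟩ => by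
    simpa [hr.symm, Fintype.card_fin] using X.rank_le_card_width⟩
  have hbdd2 : BddAbove S2 := ⟨n, fun r ⟨X, _, _, hr⟩ => by
    simpa [hr.symm, Fintype.card_fin] using X.rank_le_card_width⟩
  obtain ⟨A, hAL, hApsd, hAr⟩ := Nat.sSup_mem hne1 hbdd1
  obtain ⟨B, hBL, hBpsd, hBr⟩ := Nat.sSup_mem hne2 hbdd2
  have htr : (A * B).trace = 0 := hBL A hAL
  have hAB : A * B = 0 := psd_mul_eq_zero_of_trace hApsd hBpsd htr
  have h := Matrix.rank_add_rank_le_card_of_mul_eq_zero hAB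
  rw [Fintype.card_fin] at h
  show sSup S1 + sSup S2 ≤ n
  rw [← hAr, ← hBr]
  exact h
end
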